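/- Let U be a computably enumerable set of binary strings. Then the set {y ∈ 2^ω : for all S ⊆ K^{<ω}, if y ∈ Γ_S then S ∈ [U]^⪯} is a Σ⁰₁ (effectively open) subset of 2^ω; moreover this is uniform in an index for U. -/

import Mathlib

open MeasureTheory
open scoped NNReal ENNReal Classical

/-- `w` is an initial segment of the infinite binary sequence `x`. -/
def PrefixOf (w : List Bool) (x : ℕ → Bool) : Prop :=
  ∀ i < w.length, x i = w.getD i false

/-- The cylinder (basic clopen set) of sequences extending the string `w`. -/
def Cyl (w : List Bool) : Set (ℕ → Bool) := {x | PrefixOf w x}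

/-- The first coordinate where two distinct sequences differ. -/
noncomputable def firstDiff (x y : ℕ → Bool) (h : x ≠ y) : ℕ :=
  Nat.find (show ∃ n, x n ≠ y n from by
    by_contra hc; push_neg at hc; exact h (funext fun n => hc n))

/-- The standard ultrametric on Cantor space, `υ(x,y) = 2^{-min{n : x n ≠ y n}}`. -/
noncomputable def upsilon (x y : ℕ → Bool) : ℝ :=
  if h : x = y then 0 else (2:ℝ) ^ (-(firstDiff x y h : ℝ))

/-- Extended-real-valued version of the ultrametric. -/
noncomputable def upsilonE (x y : ℕ → Bool) : ℝ≥0∞ :=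
  if h : x = y then 0 else (2:ℝ≥0∞) ^ (-(firstDiff x y h : ℝ))

/-- The `γ`-energy `∬ dμ(a) dμ(b) / υ(a,b)^γ` of a measure on Cantor space. -/
noncomputable def energy (γ : ℝ) (μ : Measure (ℕ → Bool)) : ℝ≥0∞ :=
  ∫⁻ a, ∫⁻ b, (upsilonE a b) ^ (-γ) ∂μ ∂μ

/-- `ν` is the product measure putting each index in the random set
independently with probability `p`. -/
def IsBernoulliProduct {α : Type} (ν : Measure (α → Bool)) (p : ℝ≥0∞) : Prop :=
  ∀ F : Finset α, ν {S | ∀ a ∈ F, S a = true} = p ^ F.card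

/-- Binary encoding of a symbol of `K = 2^k` as a length-`k` binary string. -/
def encSym (k : ℕ) (a : Fin (2^k)) : List Bool := List.ofFn fun i : Fin k => Nat.testBit a.val i.val

/-- The map `ι : K^{<ω} → 2^{<ω}` encoding each symbol in binary and concatenating. -/
def encStr (k : ℕ) (σ : List (Fin (2^k))) : List Bool := (σ.map (encSym k)).flatten

/-- `Γ_S`: the closed set of infinite binary paths through the `ι`-image of the
downward (prefix-) closed part of `S ⊆ K^{<ω}`. -/
def GammaS (k : ℕ) (S : List (Fin (2^k)) → Bool) : Set (ℕ → Bool) :=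
  {x | ∀ n : ℕ, ∃ σ : List (Fin (2^k)), σ.length = n ∧
    (∀ τ, τ <+: σ → S τ = true) ∧ PrefixOf (encStr k σ) x}

/-- The open subset `[V]^⪯` of Cantor space determined by a set of strings `V`. -/
def openOf (V : Set (List Bool)) : Set (ℕ → Bool) := {x | ∃ w ∈ V, PrefixOf w x}

/-- A uniformly c.e. family of sets of binary strings. -/
def CEFamily (U : ℕ → Set (List Bool)) : Prop :=
  ∃ G : ℕ × ℕ → Option (List Bool), Computable G ∧
    ∀ n w, w ∈ U n ↔ ∃ s, G (n, s) = some w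

/-- `x` passes every (plain, unrelativized) Martin-Löf test for the measure `μ`:
Martin-Löf/Hippocrates randomness with respect to `μ`. -/
def PassesPlainTests (μ : Measure (ℕ → Bool)) (x : ℕ → Bool) : Prop :=
  ∀ U : ℕ → Set (List Bool), CEFamily U →
    (∀ n, μ (openOf (U n)) ≤ ((2:ℝ≥0∞) ^ n)⁻¹) → x ∉ ⋂ n, openOf (U n)

/-- Value of a binary string read as a binary number (last bit most significant). -/
def bitsToNat (l : List Bool) : ℕ := l.foldr (fun b acc => 2*acc + cond b 1 0) 0

/-- Truth-table reducibility: a total computable functional, given by a computable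
function producing, for each `n`, a finite query list and a truth table. -/
def ttLE (x y : ℕ → Bool) : Prop :=
  ∃ F : ℕ → List ℕ × List Bool, Computable F ∧
    ∀ n, x n = (F n).2.getD (bitsToNat ((F n).1.map y)) false

/-- Partial recursiveness in an oracle `O` (Kleene-style, following `Nat.Partrec`). -/
inductive OracleRecursiveIn (O : ℕ →. ℕ) : (ℕ →. ℕ) → Prop
  | oracle : OracleRecursiveIn O O
  | zero : OracleRecursiveIn O (pure 0)
  | succ : OracleRecursiveIn O fun n => Part.some (n + 1)
  | left : OracleRecursiveIn O fun n => Part.some (Nat.unpair n).1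
  | right : OracleRecursiveIn O fun n => Part.some (Nat.unpair n).2
  | pair {f g} : OracleRecursiveIn O f → OracleRecursiveIn O g →
      OracleRecursiveIn O fun n => Nat.pair <$> f n <*> g n
  | comp {f g} : OracleRecursiveIn O f → OracleRecursiveIn O g →
      OracleRecursiveIn O fun n => g n >>= f
  | prec {f g} : OracleRecursiveIn O f → OracleRecursiveIn O g →
      OracleRecursiveIn O (Nat.unpaired fun a n =>
        n.rec (f a) fun y IH => do let i ← IH; g (Nat.pair a (Nat.pair y i)))
  | rfind {f} : OracleRecursiveIn O f →
      OracleRecursiveIn O fun a => Nat.rfind fun n => (fun m => m = 0) <$> f (Nat.pair a n)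

/-- The total oracle corresponding to an infinite binary sequence. -/
def oracleOf (y : ℕ → Bool) : ℕ →. ℕ := fun n => Part.some (cond (y n) 1 0)

/-- Turing reducibility between binary sequences. -/
def turingLE (x y : ℕ → Bool) : Prop := OracleRecursiveIn (oracleOf y) (oracleOf x)

/-- A family of string-sets uniformly c.e. in the oracle `O`. -/
def CEInFamily (O : ℕ →. ℕ) (U : ℕ → Set (List Bool)) : Prop :=
  ∃ p : ℕ →. ℕ, OracleRecursiveIn O p ∧
    ∀ n w, w ∈ U n ↔ (Nat.pair n (Encodable.encode w)) ∈ p.Dom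

/-- `g` is a representation (an encoding as an oracle) of the measure `μ`:
`g (σ, n)` is a rational within `2^{-n}` of `μ([σ])`. -/
def Represents (g : List Bool × ℕ → ℚ) (μ : Measure (ℕ → Bool)) : Prop :=
  ∀ σ n, |(g (σ, n) : ℝ) - (μ (Cyl σ)).toReal| ≤ (2:ℝ) ^ (-(n:ℝ))

/-- The oracle determined by a representation `g` of a measure. -/
noncomputable def oracleOfRep (g : List Bool × ℕ → ℚ) : ℕ →. ℕ := fun n =>
  Part.some (Encodable.encode ((Encodable.decode (α := List Bool × ℕ) n).map g))

/-- `x` is `μ`-random: it passes every `μ`-relativized Martin-Löf test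
(uniformly c.e. in any representation of `μ`). -/
def MuRandom (μ : Measure (ℕ → Bool)) (x : ℕ → Bool) : Prop :=
  ∀ g : List Bool × ℕ → ℚ, Represents g μ →
    ∀ U : ℕ → Set (List Bool), CEInFamily (oracleOfRep g) U →
      (∀ n, μ (openOf (U n)) ≤ ((2:ℝ≥0∞) ^ n)⁻¹) → x ∉ ⋂ n, openOf (U n)

/-- The `γ`-weight of a set of strings. -/
noncomputable def wt (γ : ℝ) (C : Set (List Bool)) : ℝ≥0∞ :=
  ∑' w : C, (2:ℝ≥0∞) ^ (-(γ * ((w : List Bool)).length))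

/-- `x` is `γ`-random: it passes every Martin-Löf `γ`-test. -/
def GammaRandom (γ : ℝ) (x : ℕ → Bool) : Prop :=
  ∀ U : ℕ → Set (List Bool), CEFamily U →
    (∀ n, wt γ (U n) ≤ ((2:ℝ≥0∞) ^ n)⁻¹) → x ∉ ⋂ n, openOf (U n)


/-! A point `y` lies in the set iff every `S` containing all `σ` with `ι σ ≺ y` lies in `[U]^⪯`;
indeed `ι` multiplies lengths by `k` and is injective on strings of equal length, so `y ∈ Γ_S` just
says that `S` contains these `σ`. Reading `S` through the numbering `f` as a point `T = S ∘ f` of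
Cantor space, this is an inclusion of a closed set into an open one, and compactness makes it
finite: for some stage `s`, the `σ = f m` with `m ≤ s`, all coded by a finite prefix `v` of `y`,
and the strings of `U` enumerated by stage `s` already suffice. That finite condition is decidable
by inspecting all Boolean strings of a computable length, so enumerating the prefixes `v` for which
it holds at some stage gives the required enumeration, uniformly in the index `e`. -/

section ListComputability

open Primrec

theorem Primrec.list_sum : Primrec (List.sum : List ℕ → ℕ) :=
  (list_foldr .id (const 0) (nat_add.comp (fst.comp snd) (snd.comp snd)).to₂).of_eq
    fun _ => List.sum_eq_foldr.symm

theorem Primrec.list_isPrefix {α : Type*} [Primcodable α] :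
    PrimrecRel fun u v : List α => u <+: v :=
  PrimrecPred.of_eq (Primrec.eq.comp (list_take.comp (list_length.comp fst) snd) fst)
    fun _ => eq_comm.trans List.prefix_iff_eq_take.symm

theorem Computable.list_filterMap_range {α σ : Type*} [Primcodable α] [Primcodable σ]
    {g : α → ℕ → Option σ} (hg : Computable₂ g) :
    Computable₂ fun a n => (List.range n).filterMap (g a) := by
  open Computable in
  refine (nat_rec snd (const []) (list_append.comp (snd.comp snd)
    (Primrec.optionToList.to_comp.comp (hg.comp (fst.comp fst) (fst.comp snd)))).to₂).of_eq ?_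
  rintro ⟨a, n⟩
  induction n with
  | zero => rfl
  | succ n ih => cases h : g a n <;> simp_all [List.range_succ, List.filterMap_append]

end ListComputability

section Coding

variable {k : ℕ}

theorem encSym_length (a : Fin (2 ^ k)) : (encSym k a).length = k := by
  simp [encSym]

theorem encSym_injective : Function.Injective (encSym k) := by
  intro a b h
  have hbits := List.ofFn_inj.mp h
  refine Fin.ext (Nat.eq_of_testBit_eq fun i => ?_)
  by_cases hi : i < k
  · exact congrFun hbits ⟨i, hi⟩
  · have hk : 2 ^ k ≤ 2 ^ i := Nat.pow_le_pow_right two_pos (not_lt.mp hi)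
    rw [Nat.testBit_lt_two_pow (a.2.trans_le hk), Nat.testBit_lt_two_pow (b.2.trans_le hk)]

theorem exists_encSym_eq {l : List Bool} (hl : l.length = k) : ∃ a, encSym k a = l := by
  let e : Fin (2 ^ k) → List.Vector Bool k := fun a => ⟨encSym k a, encSym_length a⟩
  have he : Function.Bijective e := (Fintype.bijective_iff_injective_and_card e).mpr
    ⟨fun a b h => encSym_injective (congrArg Subtype.val h), by simp⟩
  obtain ⟨a, ha⟩ := he.surjective ⟨l, hl⟩
  exact ⟨a, congrArg Subtype.val ha⟩

theorem encStr_cons (a : Fin (2 ^ k)) (σ : List (Fin (2 ^ k))) :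
    encStr k (a :: σ) = encSym k a ++ encStr k σ := by
  simp [encStr]

theorem encStr_append (σ τ : List (Fin (2 ^ k))) :
    encStr k (σ ++ τ) = encStr k σ ++ encStr k τ := by
  simp [encStr]

theorem encStr_length (σ : List (Fin (2 ^ k))) : (encStr k σ).length = k * σ.length := by
  induction σ with
  | nil => rfl
  | cons a σ ih => rw [encStr_cons, List.length_append, encSym_length, ih, List.length_cons]; ring

theorem List.IsPrefix.encStr {τ σ : List (Fin (2 ^ k))} (h : τ <+: σ) :
    _root_.encStr k τ <+: _root_.encStr k σ := by
  obtain ⟨ρ, rfl⟩ := h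
  rw [encStr_append]
  exact List.prefix_append _ _

theorem encStr_inj_of_length_eq {σ τ : List (Fin (2 ^ k))} (hlen : σ.length = τ.length)
    (h : encStr k σ = encStr k τ) : σ = τ := by
  induction σ generalizing τ with
  | nil => exact (List.length_eq_zero_iff.mp hlen.symm).symm
  | cons a σ ih =>
    obtain _ | ⟨b, τ⟩ := τ
    · simp at hlen
    rw [encStr_cons, encStr_cons] at h
    obtain ⟨hab, hστ⟩ := List.append_inj h (by rw [encSym_length, encSym_length])
    rw [encSym_injective hab, ih (Nat.succ.inj hlen) hστ]

theorem exists_encStr_eq (n : ℕ) {u : List Bool} (hu : u.length = k * n) :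
    ∃ σ : List (Fin (2 ^ k)), σ.length = n ∧ encStr k σ = u := by
  induction n generalizing u with
  | zero => exact ⟨[], rfl, (List.length_eq_zero_iff.mp (by simpa using hu)).symm⟩
  | succ n ih =>
    obtain ⟨a, ha⟩ := exists_encSym_eq (k := k) (l := u.take k)
      (by rw [List.length_take, hu, Nat.mul_succ]; exact min_eq_left (Nat.le_add_left _ _))
    obtain ⟨σ, hσ, hσu⟩ := ih (u := u.drop k) (by simp [hu, Nat.mul_succ])
    exact ⟨a :: σ, by simp [hσ], by rw [encStr_cons, ha, hσu, List.take_append_drop]⟩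

theorem primrec_encStr : Primrec (encStr k) :=
  Primrec.list_flatten.comp
    (Primrec.list_map Primrec.id ((Primrec.dom_finite (encSym k)).comp Primrec.snd).to₂)

end Coding

section Prefixes

variable {u v : List Bool} {y : ℕ → Bool}

theorem prefixOf_iff_map_range : PrefixOf u y ↔ (List.range u.length).map y = u := by
  constructor
  · intro h
    refine List.ext_getElem (by simp) fun i hi _ => ?_
    have hiu : i < u.length := by simpa using hi
    simpa [List.getElem?_eq_getElem hiu] using h i hiu
  · intro h i hi
    rw [← h]
    simp [hi]

theorem prefixOf_map_range (y : ℕ → Bool) (L : ℕ) : PrefixOf ((List.range L).map y) y :=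
  prefixOf_iff_map_range.mpr (by simp)

theorem PrefixOf.of_isPrefix (hv : PrefixOf v y) (h : u <+: v) : PrefixOf u y := by
  obtain ⟨r, rfl⟩ := h
  intro i hi
  rw [hv i (by simp; omega), List.getD_append _ _ _ _ hi]

theorem isPrefix_map_range_iff {L : ℕ} (hu : u.length ≤ L) :
    u <+: (List.range L).map y ↔ PrefixOf u y := by
  rw [List.prefix_iff_eq_take, ← List.map_take, List.take_range, min_eq_left hu,
    prefixOf_iff_map_range, eq_comm]

theorem PrefixOf.eq_of_length_eq (hu : PrefixOf u y) (hv : PrefixOf v y)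
    (h : u.length = v.length) : u = v := by
  rw [← prefixOf_iff_map_range.mp hu, ← prefixOf_iff_map_range.mp hv, h]

end Prefixes

theorem mem_gammaS_iff {k : ℕ} {S : List (Fin (2 ^ k)) → Bool} {y : ℕ → Bool} :
    y ∈ GammaS k S ↔ ∀ σ, PrefixOf (encStr k σ) y → S σ = true := by
  constructor
  · intro hy σ hσ
    obtain ⟨σ', hlen, hS, hσ'⟩ := hy σ.length
    have : σ' = σ := encStr_inj_of_length_eq hlen
      (hσ'.eq_of_length_eq hσ (by rw [encStr_length, encStr_length, hlen]))
    exact this ▸ hS σ' (List.prefix_refl σ')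
  · intro h n
    obtain ⟨σ, hσ, hσy⟩ := exists_encStr_eq (k := k) n (u := (List.range (k * n)).map y) (by simp)
    have hpre : PrefixOf (encStr k σ) y := hσy ▸ prefixOf_map_range y _
    exact ⟨σ, hσ, fun τ hτ => h τ (hpre.of_isPrefix hτ.encStr), hpre⟩

theorem isOpen_cyl (w : List Bool) : IsOpen (Cyl w) := by
  have : Cyl w = ⋂ i ∈ Set.Iio w.length, (fun x : ℕ → Bool => x i) ⁻¹' {w.getD i false} := by
    ext x; simp [Cyl, PrefixOf]
  rw [this]
  exact (Set.finite_Iio _).isOpen_biInter fun i _ =>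
    (isOpen_discrete _).preimage (continuous_apply i)

theorem isOpen_openOf (V : Set (List Bool)) : IsOpen (openOf V) := by
  have : openOf V = ⋃ w ∈ V, Cyl w := by ext x; simp [openOf, Cyl]
  rw [this]
  exact isOpen_biUnion fun w _ => isOpen_cyl w

theorem openOf_mono {V V' : Set (List Bool)} (h : V ⊆ V') : openOf V ⊆ openOf V' :=
  fun _ ⟨w, hw, hx⟩ => ⟨w, h hw, hx⟩

theorem isClosed_setOf_forall_eq_true (A : Set ℕ) :
    IsClosed {T : ℕ → Bool | ∀ m ∈ A, T m = true} := by
  simp only [Set.ofPred_forall]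
  exact isClosed_biInter fun m _ => isClosed_eq (continuous_apply m) continuous_const

def Covers (A : Set ℕ) (V : Set (List Bool)) : Prop :=
  {T : ℕ → Bool | ∀ m ∈ A, T m = true} ⊆ openOf V

theorem exists_covers_of_covers_iUnion {A : ℕ → Set ℕ} {V : ℕ → Set (List Bool)}
    (hA : Monotone A) (hV : Monotone V) (h : Covers (⋃ s, A s) (⋃ s, V s)) :
    ∃ s, Covers (A s) (V s) := by
  let O s := {T : ℕ → Bool | ∀ m ∈ A s, T m = true}ᶜ ∪ openOf (V s)
  have hO s : IsOpen (O s) :=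
    (isClosed_setOf_forall_eq_true _).isOpen_compl.union (isOpen_openOf _)
  have hOmono : Monotone O := fun s t hst =>
    Set.union_subset_union (Set.compl_subset_compl.mpr fun T hT m hm => hT m (hA hst hm))
      (openOf_mono (hV hst))
  have hcover : Set.univ ⊆ ⋃ s, O s := by
    intro T _
    by_cases hT : ∀ m ∈ ⋃ s, A s, T m = true
    · obtain ⟨w, hw, hTw⟩ := h hT
      obtain ⟨s, hs⟩ := Set.mem_iUnion.mp hw
      exact Set.mem_iUnion.mpr ⟨s, Or.inr ⟨w, hs, hTw⟩⟩
    · push Not at hT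
      obtain ⟨m, hm, hTm⟩ := hT
      obtain ⟨s, hs⟩ := Set.mem_iUnion.mp hm
      exact Set.mem_iUnion.mpr ⟨s, Or.inl fun hforced => hTm (hforced m hs)⟩
  obtain ⟨s, hs⟩ := isCompact_univ.elim_directed_cover O hO hcover hOmono.directed_le
  exact ⟨s, fun T hT => (hs (Set.mem_univ T)).resolve_left (not_not.mpr hT)⟩

def allBoolLists : ℕ → List (List Bool)
  | 0 => [[]]
  | n + 1 => (allBoolLists n).flatMap fun t => [false :: t, true :: t]

theorem mem_allBoolLists {t : List Bool} {n : ℕ} : t ∈ allBoolLists n ↔ t.length = n := by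
  induction n generalizing t with
  | zero => simp [allBoolLists]
  | succ n ih =>
    obtain _ | ⟨b, t⟩ := t
    · simp [allBoolLists]
    · cases b <;> simp [allBoolLists, ih]

theorem covers_iff_forall_mem_allBoolLists {M : List ℕ} {W : List (List Bool)} {R : ℕ}
    (hM : ∀ m ∈ M, m < R) (hW : ∀ w ∈ W, w.length ≤ R) :
    Covers {m | m ∈ M} {w | w ∈ W} ↔
      ∀ t ∈ allBoolLists R, (∀ m ∈ M, t.getD m false = true) → ∃ w ∈ W, w <+: t := by
  constructor
  · intro h t ht hforced
    have ht : (List.range R).map (t.getD · false) = t := by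
      rw [← mem_allBoolLists.mp ht]
      exact prefixOf_iff_map_range.mp fun _ _ => rfl
    obtain ⟨w, hw, hwt⟩ := h hforced
    exact ⟨w, hw, ht ▸ (isPrefix_map_range_iff (hW w hw)).mpr hwt⟩
  · intro h T hT
    obtain ⟨w, hw, hwt⟩ := h ((List.range R).map T) (mem_allBoolLists.mpr (by simp))
      fun m hm => by simpa [hM m hm] using hT m hm
    exact ⟨w, hw, (isPrefix_map_range_iff (hW w hw)).mp hwt⟩

section CoversDecidable

open Primrec

theorem primrec_allBoolLists : Primrec allBoolLists := by
  have hstep : Primrec₂ fun (_ : ℕ) (l : List (List Bool)) =>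
      l.flatMap fun t => [false :: t, true :: t] :=
    (list_flatMap snd (list_cons.comp (list_cons.comp (const false) snd)
      (list_cons.comp (list_cons.comp (const true) snd) (const []))).to₂).to₂
  refine (nat_rec₁ [[]] hstep).of_eq fun n => ?_
  induction n with
  | zero => rfl
  | succ n ih => simp only [allBoolLists, ← ih]

theorem primrecPred_covers :
    PrimrecPred fun p : List ℕ × List (List Bool) => Covers {m | m ∈ p.1} {w | w ∈ p.2} := by
  have hforced : PrimrecRel fun (M : List ℕ) (t : List Bool) =>
      ∀ m ∈ M, t.getD m false = true :=
    PrimrecRel.forall_mem_list (R := fun m (t : List Bool) => t.getD m false = true)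
      (Primrec.eq.comp ((list_getD false).comp snd fst) (const true))
  have hbody : PrimrecRel fun (t : List Bool) (p : List ℕ × List (List Bool)) =>
      (∀ m ∈ p.1, t.getD m false = true) → ∃ w ∈ p.2, w <+: t :=
    PrimrecPred.of_eq
      ((hforced.comp (fst.comp snd) fst).not.or
        (Primrec.list_isPrefix.exists_mem_list.comp (snd.comp snd) fst))
      fun _ => imp_iff_not_or.symm
  have hbound : Primrec fun p : List ℕ × List (List Bool) =>
      (p.1 ++ p.2.map List.length).sum + 1 :=
    succ.comp (Primrec.list_sum.comp
      (list_append.comp fst (list_map snd (list_length.comp snd).to₂)))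
  refine PrimrecPred.of_eq (hbody.forall_mem_list.comp (primrec_allBoolLists.comp hbound) .id)
    fun p => (covers_iff_forall_mem_allBoolLists (fun m hm => ?_) (fun w hw => ?_)).symm
  · exact Nat.lt_succ_of_le (List.le_sum_of_mem (List.mem_append_left _ hm))
  · exact Nat.le_succ_of_le (List.le_sum_of_mem (List.mem_append_right _ (List.mem_map_of_mem hw)))

end CoversDecidable

section Enumeration

variable {k : ℕ} {f : ℕ → List (Fin (2 ^ k))} {G : ℕ × ℕ → Option (List Bool)}

variable (k f) in
def forcedIndices (v : List Bool) (s : ℕ) : List ℕ :=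
  (List.range (s + 1)).filter fun m => encStr k (f m) <+: v

variable (G) in
def stageStrings (e s : ℕ) : List (List Bool) :=
  (List.range (s + 1)).filterMap fun s' => G (e, s')

theorem mem_forcedIndices {v : List Bool} {s m : ℕ} :
    m ∈ forcedIndices k f v s ↔ m ≤ s ∧ encStr k (f m) <+: v := by
  simp [forcedIndices]

theorem mem_stageStrings {e s : ℕ} {w : List Bool} :
    w ∈ stageStrings G e s ↔ ∃ s' ≤ s, G (e, s') = some w := by
  simp [stageStrings]

variable (k f G) in
/-- The second argument codes a candidate prefix `v` of `y` and a stage `s` as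
`Nat.pair (encode v) s`. -/
noncomputable def coverEnum (p : ℕ × ℕ) : Option (List Bool) :=
  (Encodable.decode (α := List Bool) p.2.unpair.1).bind fun v =>
    if Covers {m | m ∈ forcedIndices k f v p.2.unpair.2} {w | w ∈ stageStrings G p.1 p.2.unpair.2}
    then some v else none

theorem computable_coverEnum (hf : Computable f) (hG : Computable G) :
    Computable (coverEnum k f G) := by
  open Computable in
  have hforced : Computable₂ (forcedIndices k f) := by
    have hstep : Computable₂ fun (v : List Bool) (m : ℕ) =>
        cond (decide (encStr k (f m) <+: v)) (some m) none :=
      (Computable.cond (Primrec.list_isPrefix.decide.to_comp.comp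
        (primrec_encStr.to_comp.comp (hf.comp snd)) fst) (option_some.comp snd) (const none)).to₂
    refine ((Computable.list_filterMap_range hstep).comp fst (succ.comp snd)).of_eq fun p => ?_
    simp [forcedIndices, ← List.filterMap_eq_filter, Option.guard, Bool.cond_decide]
  have hstages : Computable₂ (stageStrings G) :=
    (Computable.list_filterMap_range (g := fun e s' => G (e, s')) (hG.comp (fst.pair snd))).comp
      fst (succ.comp snd)
  have hcovers : Computable₂ fun (e : ℕ) (p : List Bool × ℕ) => decide
      (Covers {m | m ∈ forcedIndices k f p.1 p.2} {w | w ∈ stageStrings G e p.2}) :=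
    primrecPred_covers.decide.to_comp.comp
      (g := fun q : ℕ × (List Bool × ℕ) =>
        (forcedIndices k f q.2.1 q.2.2, stageStrings G q.1 q.2.2))
      ((hforced.comp (fst.comp snd) (snd.comp snd)).pair (hstages.comp fst (snd.comp snd)))
  have hbranch : Computable₂ fun (p : ℕ × ℕ) (v : List Bool) =>
      cond (decide (Covers {m | m ∈ forcedIndices k f v p.2.unpair.2}
        {w | w ∈ stageStrings G p.1 p.2.unpair.2})) (some v) none :=
    Computable.cond
      (hcovers.comp (g := fun q : (ℕ × ℕ) × List Bool => q.1.1)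
        (h := fun q => (q.2, q.1.2.unpair.2)) (fst.comp fst)
        (snd.pair (snd.comp (unpair.comp (snd.comp fst)))))
      (option_some.comp snd) (const none)
  refine (option_bind (Primrec.decode.to_comp.comp (fst.comp (unpair.comp snd))) hbranch).of_eq
    fun p => ?_
  simp [coverEnum, Bool.cond_decide]

variable {e : ℕ} {y : ℕ → Bool}

theorem coverEnum_sound {n : ℕ} {v : List Bool} {S : List (Fin (2 ^ k)) → Bool}
    (hn : coverEnum k f G (e, n) = some v) (hv : PrefixOf v y) (hS : y ∈ GammaS k S) :
    ∃ s w, G (e, s) = some w ∧ PrefixOf w (fun m => S (f m)) := by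
  obtain ⟨v', -, hif⟩ := Option.bind_eq_some_iff.mp hn
  split_ifs at hif with hcov
  obtain rfl := Option.some.inj hif
  obtain ⟨w, hw, hwS⟩ := hcov (a := fun m => S (f m)) fun m hm =>
    mem_gammaS_iff.mp hS _ (hv.of_isPrefix (mem_forcedIndices.mp hm).2)
  obtain ⟨s, -, hs⟩ := mem_stageStrings.mp hw
  exact ⟨s, w, hs, hwS⟩

theorem covers_of_forall_gammaS (hf : f.Injective)
    (hy : ∀ S, y ∈ GammaS k S → ∃ s w, G (e, s) = some w ∧ PrefixOf w (fun m => S (f m))) :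
    Covers (⋃ s, {m | m ≤ s ∧ PrefixOf (encStr k (f m)) y})
      (⋃ s, {w | ∃ s' ≤ s, G (e, s') = some w}) := by
  intro T hT
  let S : List (Fin (2 ^ k)) → Bool := fun σ => if h : ∃ m, f m = σ then T h.choose else true
  have hSf : (fun m => S (f m)) = T := funext fun m => by
    have h : ∃ m', f m' = f m := ⟨m, rfl⟩
    simp only [S, dif_pos h, hf h.choose_spec]
  have hyS : y ∈ GammaS k S := by
    refine mem_gammaS_iff.mpr fun σ hσ => ?_
    by_cases h : ∃ m, f m = σ
    · obtain ⟨m, rfl⟩ := h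
      rw [congrFun hSf m]
      exact hT m (Set.mem_iUnion.mpr ⟨m, le_rfl, hσ⟩)
    · simp [S, h]
  obtain ⟨s, w, hs, hw⟩ := hy S hyS
  exact ⟨w, Set.mem_iUnion.mpr ⟨s, s, le_rfl, hs⟩, hSf ▸ hw⟩

theorem coverEnum_complete (hf : f.Injective)
    (hy : ∀ S, y ∈ GammaS k S → ∃ s w, G (e, s) = some w ∧ PrefixOf w (fun m => S (f m))) :
    ∃ n v, coverEnum k f G (e, n) = some v ∧ PrefixOf v y := by
  obtain ⟨s, hs⟩ := exists_covers_of_covers_iUnion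
    (by exact fun _ _ hst _ ⟨hm, h⟩ => ⟨hm.trans hst, h⟩)
    (by exact fun _ _ hst _ ⟨s', hs', h⟩ => ⟨s', hs'.trans hst, h⟩) (covers_of_forall_gammaS hf hy)
  let L := (Finset.range (s + 1)).sup fun m => (encStr k (f m)).length
  let v := (List.range L).map y
  have hforced : {m | m ∈ forcedIndices k f v s} = {m | m ≤ s ∧ PrefixOf (encStr k (f m)) y} := by
    ext m
    simp only [Set.mem_ofPred_eq, mem_forcedIndices]
    exact and_congr_right fun hm => isPrefix_map_range_iff
      (Finset.le_sup (f := fun m => (encStr k (f m)).length) (by simpa [Nat.lt_succ_iff]))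
  have hstages : {w | w ∈ stageStrings G e s} = {w | ∃ s' ≤ s, G (e, s') = some w} :=
    Set.ext fun _ => mem_stageStrings
  refine ⟨Nat.pair (Encodable.encode v) s, v, ?_, prefixOf_map_range y L⟩
  simp [coverEnum, hforced, hstages, hs]

end Enumeration

theorem stmt10_general (k : ℕ) (f : ℕ → List (Fin (2^k)))
    (hfc : Computable f) (hfb : Function.Bijective f)
    (G : ℕ × ℕ → Option (List Bool)) (hG : Computable G) :
    ∃ H : ℕ × ℕ → Option (List Bool), Computable H ∧ ∀ e : ℕ,
      {y : ℕ → Bool | ∀ S : List (Fin (2^k)) → Bool, y ∈ GammaS k S →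
          ∃ s w, G (e, s) = some w ∧ PrefixOf w (fun m => S (f m))}
        = {y | ∃ s w, H (e, s) = some w ∧ PrefixOf w y} := by
  refine ⟨coverEnum k f G, computable_coverEnum hfc hG, fun e => Set.ext fun y => ⟨?_, ?_⟩⟩
  · exact coverEnum_complete hfb.injective
  · rintro ⟨n, v, hn, hv⟩ S hS
    exact coverEnum_sound hn hv hS

theorem stmt10 (k : ℕ) (hk : 1 ≤ k) (f : ℕ → List (Fin (2^k)))
    (hfc : Computable f) (hfb : Function.Bijective f)
    (G : ℕ × ℕ → Option (List Bool)) (hG : Computable G) :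
    ∃ H : ℕ × ℕ → Option (List Bool), Computable H ∧ ∀ e : ℕ,
      {y : ℕ → Bool | ∀ S : List (Fin (2^k)) → Bool, y ∈ GammaS k S →
          ∃ s w, G (e, s) = some w ∧ PrefixOf w (fun m => S (f m))}
        = {y | ∃ s w, H (e, s) = some w ∧ PrefixOf w y} :=
  stmt10_general k f hfc hfb G hG
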